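/- Fix x, y, θ̄ with 0 < θ̄ ≤ y and x ≥ 0, and let ξ = diag(x,y) and A be the 2×2 matrix with rows (1, √((y−θ̄)/(x+θ̄))) and (−√((y−θ̄)/(x+θ̄)), −(y−θ̄)/(x+θ̄)). Then A has rank one, and for all t ∈ [t₋, t₊] with t₋ = −xy(x+θ̄)/(θ̄(x+y)) and t₊ = (y−x)(x+θ̄)/(x+y), the singular values of ξ+tA satisfy λ₁(ξ+tA)λ₂(ξ+tA) + θ̄(λ₂(ξ+tA) − λ₁(ξ+tA)) = xy + θ̄(y−x). -/
import Mathlib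


/-- Frobenius norm squared of a 2×2 real matrix. -/
noncomputable def frobSq (ξ : Matrix (Fin 2) (Fin 2) ℝ) : ℝ := ∑ i, ∑ j, (ξ i j) ^ 2

/-- The smaller singular value `λ₁(ξ)` of a 2×2 real matrix. -/
noncomputable def lam1 (ξ : Matrix (Fin 2) (Fin 2) ℝ) : ℝ :=
  (Real.sqrt (frobSq ξ + 2 * |ξ.det|) - Real.sqrt (frobSq ξ - 2 * |ξ.det|)) / 2

/-- The larger singular value `λ₂(ξ)` of a 2×2 real matrix. -/
noncomputable def lam2 (ξ : Matrix (Fin 2) (Fin 2) ℝ) : ℝ :=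
  (Real.sqrt (frobSq ξ + 2 * |ξ.det|) + Real.sqrt (frobSq ξ - 2 * |ξ.det|)) / 2

theorem rank_one_direction (x y θ : ℝ) (hx : 0 < x) (hxy : x < y) (hθ : 0 < θ) (hθy : θ ≤ y) :
    let c : ℝ := Real.sqrt ((y - θ) / (x + θ))
    let A : Matrix (Fin 2) (Fin 2) ℝ := !![1, c; -c, -c ^ 2]
    let ξ : Matrix (Fin 2) (Fin 2) ℝ := !![x, 0; 0, y]
    A.rank = 1 ∧
    ∀ t ∈ Set.Icc (-(x * y * (x + θ)) / (θ * (x + y))) ((y - x) * (x + θ) / (x + y)),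
      lam1 (ξ + t • A) * lam2 (ξ + t • A) + θ * (lam2 (ξ + t • A) - lam1 (ξ + t • A)) =
        x * y + θ * (y - x) := by
  intro c A ξ
  have hxθ : (0:ℝ) < x + θ := by linarith
  have hxyp : (0:ℝ) < x + y := by linarith
  have hc2 : c ^ 2 = (y - θ) / (x + θ) :=
    Real.sq_sqrt (div_nonneg (by linarith) hxθ.le)
  have hcc : c ^ 2 * (x + θ) = y - θ := by
    rw [hc2]; field_simp
  constructor
  · -- rank part
    have hfact : A = (!![1; -c] : Matrix (Fin 2) (Fin 1) ℝ) * (!![1, c] : Matrix (Fin 1) (Fin 2) ℝ) := by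
      ext i j
      fin_cases i <;> fin_cases j <;>
        simp [A, Matrix.mul_apply, Fin.sum_univ_succ] <;> ring
    have h1 : A.rank ≤ 1 := by
      rw [hfact]
      calc ((!![1; -c] : Matrix (Fin 2) (Fin 1) ℝ) * !![1, c]).rank
          ≤ (!![1; -c] : Matrix (Fin 2) (Fin 1) ℝ).rank := Matrix.rank_mul_le_left _ _
        _ ≤ Fintype.card (Fin 1) := Matrix.rank_le_card_width _
        _ = 1 := by simp
    have h2 : 1 ≤ A.rank := by
      rw [Nat.one_le_iff_ne_zero]
      intro h0
      rw [Matrix.rank, Submodule.finrank_eq_zero, LinearMap.range_eq_bot] at h0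
      have h1 := congrFun (congrArg DFunLike.coe h0) (Pi.single 0 1)
      have h2 := congrFun h1 0
      simp [Matrix.mulVecLin_apply, Matrix.mulVec, dotProduct,
        Fin.sum_univ_two, A, Pi.single] at h2
    omega
  · intro t ht
    obtain ⟨ht1, ht2⟩ := ht
    have hM : ξ + t • A = !![x + t, t * c; -(t * c), y - t * c ^ 2] := by
      ext i j
      fin_cases i <;> fin_cases j <;> simp [ξ, A] <;> ring
    rw [hM]
    set M : Matrix (Fin 2) (Fin 2) ℝ := !![x + t, t * c; -(t * c), y - t * c ^ 2] with hMdef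
    set d : ℝ := x * y + t * (θ * (x + y) / (x + θ)) with hd
    set e : ℝ := (y - x) - t * ((x + y) / (x + θ)) with he
    have hdet : M.det = d := by
      have h : M.det = x * y + t * (y - x * c ^ 2) := by
        rw [hMdef, Matrix.det_fin_two_of]; ring
      rw [h, hc2, hd]
      field_simp
      all_goals ring_nf
      all_goals tauto
    have hF : frobSq M = 2 * d + e ^ 2 := by
      have h : frobSq M = (x + t) ^ 2 + 2 * t ^ 2 * c ^ 2 + (y - t * c ^ 2) ^ 2 := by
        simp [frobSq, Fin.sum_univ_two, hMdef]
        ring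
      rw [h, hc2, hd, he]
      field_simp
      all_goals ring_nf
      all_goals tauto
    have ht1' : -(x * y * (x + θ)) ≤ t * (θ * (x + y)) := by
      rwa [div_le_iff₀ (by positivity)] at ht1
    have hd0 : 0 ≤ d := by
      have h1 : -(x * y) ≤ t * (θ * (x + y)) / (x + θ) := by
        rw [le_div_iff₀ hxθ]
        nlinarith [ht1']
      have hrw : t * (θ * (x + y) / (x + θ)) = t * (θ * (x + y)) / (x + θ) := by ring
      rw [hd, hrw]
      linarith
    have ht2' : t * (x + y) ≤ (y - x) * (x + θ) := by
      rwa [le_div_iff₀ (by positivity)] at ht2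
    have he0 : 0 ≤ e := by
      have h2 : t * (x + y) / (x + θ) ≤ y - x := by
        rw [div_le_iff₀ hxθ]
        nlinarith [ht2']
      have hrw : t * ((x + y) / (x + θ)) = t * (x + y) / (x + θ) := by ring
      rw [he, hrw]
      linarith
    have hFd : 0 ≤ frobSq M - 2 * |M.det| := by
      rw [hdet, abs_of_nonneg hd0, hF]; nlinarith
    have hFd' : 0 ≤ frobSq M + 2 * |M.det| := by
      rw [hdet, abs_of_nonneg hd0, hF]; nlinarith
    have hb : Real.sqrt (frobSq M - 2 * |M.det|) = e := by
      rw [hdet, abs_of_nonneg hd0, hF]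
      rw [show 2 * d + e ^ 2 - 2 * d = e ^ 2 by ring]
      exact Real.sqrt_sq he0
    have ha2 : (Real.sqrt (frobSq M + 2 * |M.det|)) ^ 2 = frobSq M + 2 * |M.det| :=
      Real.sq_sqrt hFd'
    unfold lam1 lam2
    set a := Real.sqrt (frobSq M + 2 * |M.det|)
    rw [hb]
    have key : (a - e) / 2 * ((a + e) / 2) + θ * ((a + e) / 2 - (a - e) / 2)
        = (a ^ 2 - e ^ 2) / 4 + θ * e := by ring
    rw [key, ha2, hdet, abs_of_nonneg hd0, hF, hd, he]
    field_simp
    all_goals ring_nf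
    all_goals tauto
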